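/- arXiv:2101.04957 — 5 statements merged into one kernel-verified Lean document; each statement's English description precedes it below -/
import Mathlib

section
/- Let (X, A) be an A-metric space and f : X → X an AZ mapping (A-Zamfirescu mapping). Then there exists δ with 0 ≤ δ < 1 such that for all x, y ∈ X: A(fx, ..., fx, fy) ≤ δ·A(x, ..., x, y) + t·δ·A(fx, ..., fx, x), and also A(fx, ..., fx, fy) ≤ δ·A(x, ..., x, y) + t·δ·A(fy, ..., fy, x). Moreover one may take δ = max{a, b/(1 − b(t−1)), c/(1 − c(t−1))}. -/
open Finset Filter

def Amet {X : Type*} {t : ℕ} (A : (Fin t → X) → ℝ) (x y : X) : ℝ :=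
  A (fun j => if (j : ℕ) = t - 1 then y else x)

set_option maxHeartbeats 1000000 in
theorem stmt3 {X : Type*} {t : ℕ} (ht : 2 ≤ t) (A : (Fin t → X) → ℝ)
    (hA1 : ∀ v, 0 ≤ A v)
    (hA2 : ∀ v, A v = 0 ↔ ∀ i j, v i = v j)
    (hA3 : ∀ (v : Fin t → X) (y : X), A v ≤ ∑ i, Amet A (v i) y)
    (f : X → X) (a b c : ℝ)
    (ha : 0 ≤ a ∧ a < 1) (hb : 0 ≤ b ∧ b < 1 / t) (hc : 0 ≤ c ∧ c < 1 / t)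
    (hAZ : ∀ x y : X,
      Amet A (f x) (f y) ≤ a * Amet A x y ∨
      Amet A (f x) (f y) ≤ b * (Amet A (f x) x + Amet A (f y) y) ∨
      Amet A (f x) (f y) ≤ c * (Amet A (f x) y + Amet A (f y) x)) :
    0 ≤ max a (max (b / (1 - b * ((t : ℝ) - 1))) (c / (1 - c * ((t : ℝ) - 1)))) ∧
    max a (max (b / (1 - b * ((t : ℝ) - 1))) (c / (1 - c * ((t : ℝ) - 1)))) < 1 ∧
    ∀ x y : X,
      Amet A (f x) (f y) ≤
        max a (max (b / (1 - b * ((t : ℝ) - 1))) (c / (1 - c * ((t : ℝ) - 1)))) * Amet A x y +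
        t * max a (max (b / (1 - b * ((t : ℝ) - 1))) (c / (1 - c * ((t : ℝ) - 1)))) * Amet A (f x) x ∧
      Amet A (f x) (f y) ≤
        max a (max (b / (1 - b * ((t : ℝ) - 1))) (c / (1 - c * ((t : ℝ) - 1)))) * Amet A x y +
        t * max a (max (b / (1 - b * ((t : ℝ) - 1))) (c / (1 - c * ((t : ℝ) - 1)))) * Amet A (f y) x := by
  have ht' : (2:ℝ) ≤ (t:ℝ) := by exact_mod_cast ht
  have htpos : (0:ℝ) < (t:ℝ) := by linarith
  set δ := max a (max (b / (1 - b * ((t : ℝ) - 1))) (c / (1 - c * ((t : ℝ) - 1)))) with hδdef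
  have hApos : ∀ u v : X, 0 ≤ Amet A u v := fun u v => hA1 _
  have hself : ∀ u : X, Amet A u u = 0 := by
    intro u
    exact (hA2 _).mpr (fun i j => by simp)
  have htri : ∀ u v z : X, Amet A u v ≤ ((t:ℝ) - 1) * Amet A u z + Amet A v z := by
    intro u v z
    have hl : t - 1 < t := by omega
    set l : Fin t := ⟨t - 1, hl⟩ with hldef
    have h := hA3 (fun j => if (j : ℕ) = t - 1 then v else u) z
    have hiff : ∀ i : Fin t, ((i : ℕ) = t - 1) ↔ i = l := by
      intro i
      constructor
      · intro h; exact Fin.ext h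
      · intro h; rw [h]
    have hsum : ∑ i : Fin t, Amet A (if (i : ℕ) = t - 1 then v else u) z
        = ((t:ℝ) - 1) * Amet A u z + Amet A v z := by
      have heq : ∀ i : Fin t, Amet A (if (i : ℕ) = t - 1 then v else u) z
          = Amet A u z + (if i = l then Amet A v z - Amet A u z else 0) := by
        intro i
        by_cases hi : (i : ℕ) = t - 1
        · rw [if_pos hi, if_pos ((hiff i).mp hi)]; ring
        · rw [if_neg hi, if_neg (fun h => hi ((hiff i).mpr h))]; ring
      rw [Finset.sum_congr rfl (fun i _ => heq i), Finset.sum_add_distrib,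
        Finset.sum_const, Finset.sum_ite_eq' Finset.univ l]
      simp only [Finset.mem_univ, if_true, Finset.card_univ, Fintype.card_fin, nsmul_eq_mul]
      ring
    calc Amet A u v ≤ ∑ i : Fin t, Amet A (if (i : ℕ) = t - 1 then v else u) z := h
      _ = ((t:ℝ) - 1) * Amet A u z + Amet A v z := hsum
  have hsym : ∀ u v : X, Amet A u v = Amet A v u := by
    intro u v
    have h1 := htri u v u
    have h2 := htri v u v
    rw [hself] at h1 h2
    linarith
  have hbt : b * (t:ℝ) < 1 := by
    have := (lt_div_iff₀ htpos).mp hb.2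
    linarith
  have hct : c * (t:ℝ) < 1 := by
    have := (lt_div_iff₀ htpos).mp hc.2
    linarith
  have hbden : 0 < 1 - b * ((t:ℝ) - 1) := by nlinarith [hb.1]
  have hcden : 0 < 1 - c * ((t:ℝ) - 1) := by nlinarith [hc.1]
  have hblt : b / (1 - b * ((t:ℝ) - 1)) < 1 := by
    rw [div_lt_one hbden]; nlinarith
  have hclt : c / (1 - c * ((t:ℝ) - 1)) < 1 := by
    rw [div_lt_one hcden]; nlinarith
  have hδ0 : 0 ≤ δ := le_trans ha.1 (le_max_left _ _)
  have hδ1 : δ < 1 := max_lt ha.2 (max_lt hblt hclt)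
  refine ⟨hδ0, hδ1, ?_⟩
  have hbδ : b / (1 - b * ((t:ℝ) - 1)) ≤ δ := le_trans (le_max_left _ _) (le_max_right _ _)
  have hcδ : c / (1 - c * ((t:ℝ) - 1)) ≤ δ := le_trans (le_max_right _ _) (le_max_right _ _)
  have haδ : a ≤ δ := le_max_left _ _
  -- core solving lemma: from D ≤ e*((t-1)D + tG + dxy), conclude D ≤ δ dxy + t δ G
  have main : ∀ e D G dxy : ℝ, 0 ≤ e → 0 < 1 - e * ((t:ℝ) - 1) →
      e / (1 - e * ((t:ℝ) - 1)) ≤ δ → 0 ≤ dxy → 0 ≤ G →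
      D ≤ e * (((t:ℝ) - 1) * D + (t:ℝ) * G + dxy) →
      D ≤ δ * dxy + (t:ℝ) * δ * G := by
    intro e D G dxy he hpos hle hdxy hG hD
    have hS : (0:ℝ) ≤ dxy + (t:ℝ) * G := by positivity
    have hkey : (1 - e * ((t:ℝ) - 1)) * D ≤ e * (dxy + (t:ℝ) * G) := by nlinarith [hD]
    have h1 : D ≤ e / (1 - e * ((t:ℝ) - 1)) * (dxy + (t:ℝ) * G) := by
      rw [div_mul_eq_mul_div, le_div_iff₀ hpos]
      nlinarith [hkey]
    have h2 : e / (1 - e * ((t:ℝ) - 1)) * (dxy + (t:ℝ) * G) ≤ δ * (dxy + (t:ℝ) * G) :=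
      mul_le_mul_of_nonneg_right hle hS
    nlinarith [h1, h2]
  intro x y
  have hDpos : 0 ≤ Amet A (f x) (f y) := hApos _ _
  have hdxypos : 0 ≤ Amet A x y := hApos _ _
  have hPpos : 0 ≤ Amet A (f x) x := hApos _ _
  have hQpos : 0 ≤ Amet A (f y) x := hApos _ _
  rcases hAZ x y with h | h | h
  · -- AZ1
    have hd : Amet A (f x) (f y) ≤ δ * Amet A x y :=
      le_trans h (mul_le_mul_of_nonneg_right haδ hdxypos)
    constructor
    · have : (0:ℝ) ≤ (t:ℝ) * δ * Amet A (f x) x := by positivity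
      linarith
    · have : (0:ℝ) ≤ (t:ℝ) * δ * Amet A (f y) x := by positivity
      linarith
  · -- AZ2
    constructor
    · have t1 : Amet A (f y) y ≤ ((t:ℝ) - 1) * Amet A (f x) (f y) + Amet A (f x) y := by
        have h0 := htri (f y) y (f x)
        rw [hsym (f y) (f x), hsym y (f x)] at h0
        exact h0
      have t2 : Amet A (f x) y ≤ ((t:ℝ) - 1) * Amet A (f x) x + Amet A x y := by
        have h0 := htri (f x) y x
        rw [hsym y x] at h0
        exact h0
      have hsum : Amet A (f x) x + Amet A (f y) y ≤
          ((t:ℝ) - 1) * Amet A (f x) (f y) + (t:ℝ) * Amet A (f x) x + Amet A x y := by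
        linarith
      have hmul := mul_le_mul_of_nonneg_left hsum hb.1
      exact main b _ _ _ hb.1 hbden hbδ hdxypos hPpos (le_trans h hmul)
    · have t1 : Amet A (f x) x ≤ ((t:ℝ) - 1) * Amet A (f x) (f y) + Amet A (f y) x := by
        have h0 := htri (f x) x (f y)
        rw [hsym x (f y)] at h0
        exact h0
      have t2 : Amet A (f y) y ≤ ((t:ℝ) - 1) * Amet A (f y) x + Amet A x y := by
        have h0 := htri (f y) y x
        rw [hsym y x] at h0
        exact h0
      have hsum : Amet A (f x) x + Amet A (f y) y ≤
          ((t:ℝ) - 1) * Amet A (f x) (f y) + (t:ℝ) * Amet A (f y) x + Amet A x y := by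
        linarith
      have hmul := mul_le_mul_of_nonneg_left hsum hb.1
      exact main b _ _ _ hb.1 hbden hbδ hdxypos hQpos (le_trans h hmul)
  · -- AZ3
    constructor
    · have t1 : Amet A (f x) y ≤ ((t:ℝ) - 1) * Amet A (f x) x + Amet A x y := by
        have h0 := htri (f x) y x
        rw [hsym y x] at h0
        exact h0
      have t2 : Amet A (f y) x ≤ ((t:ℝ) - 1) * Amet A (f x) (f y) + Amet A (f x) x := by
        have h0 := htri (f y) x (f x)
        rw [hsym (f y) (f x), hsym x (f x)] at h0
        exact h0
      have hsum : Amet A (f x) y + Amet A (f y) x ≤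
          ((t:ℝ) - 1) * Amet A (f x) (f y) + (t:ℝ) * Amet A (f x) x + Amet A x y := by
        linarith
      have hmul := mul_le_mul_of_nonneg_left hsum hc.1
      exact main c _ _ _ hc.1 hcden hcδ hdxypos hPpos (le_trans h hmul)
    · have t1 : Amet A (f x) y ≤ ((t:ℝ) - 1) * Amet A (f x) (f y) + Amet A (f y) y := by
        have h0 := htri (f x) y (f y)
        rw [hsym y (f y)] at h0
        exact h0
      have t2 : Amet A (f y) y ≤ ((t:ℝ) - 1) * Amet A (f y) x + Amet A x y := by
        have h0 := htri (f y) y x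
        rw [hsym y x] at h0
        exact h0
      have hsum : Amet A (f x) y + Amet A (f y) x ≤
          ((t:ℝ) - 1) * Amet A (f x) (f y) + (t:ℝ) * Amet A (f y) x + Amet A x y := by
        linarith
      have hmul := mul_le_mul_of_nonneg_left hsum hc.1
      exact main c _ _ _ hc.1 hcden hcδ hdxypos hQpos (le_trans h hmul)
end

section
/- Let (X, A) be an A-metric space, f : X → X an AZ mapping, x_0 ∈ X arbitrary, and x_{n+1} = f(x_n) the Picard sequence. Then there exists δ ∈ [0,1) such that A(x_{n+1}, ..., x_{n+1}, x_n) ≤ δ^n · A(x_0, ..., x_0, x_1) for all n, and consequently (x_n) is a Cauchy sequence. -/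
open Finset Filter

theorem stmt5 {X : Type*} {t : ℕ} (ht : 2 ≤ t) (A : (Fin t → X) → ℝ)
    (hA1 : ∀ v, 0 ≤ A v)
    (hA2 : ∀ v, A v = 0 ↔ ∀ i j, v i = v j)
    (hA3 : ∀ (v : Fin t → X) (y : X), A v ≤ ∑ i, Amet A (v i) y)
    (f : X → X) (a b c : ℝ)
    (ha : 0 ≤ a ∧ a < 1) (hb : 0 ≤ b ∧ b < 1 / t) (hc : 0 ≤ c ∧ c < 1 / t)
    (hAZ : ∀ x y : X,
      Amet A (f x) (f y) ≤ a * Amet A x y ∨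
      Amet A (f x) (f y) ≤ b * (Amet A (f x) x + Amet A (f y) y) ∨
      Amet A (f x) (f y) ≤ c * (Amet A (f x) y + Amet A (f y) x))
    (x₀ : X) :
    ∃ δ : ℝ, 0 ≤ δ ∧ δ < 1 ∧
      (∀ n : ℕ, Amet A (f^[n + 1] x₀) (f^[n] x₀) ≤ δ ^ n * Amet A x₀ (f x₀)) ∧
      Tendsto (fun p : ℕ × ℕ => Amet A (f^[p.1] x₀) (f^[p.2] x₀)) atTop (nhds 0) := by
  have ht2 : (2:ℝ) ≤ (t:ℝ) := by exact_mod_cast ht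
  have htpos : (0:ℝ) < (t:ℝ) := by linarith
  -- d(x,x) = 0
  have hself : ∀ x : X, Amet A x x = 0 := by
    intro x
    have hv : (fun j : Fin t => if (j:ℕ) = t - 1 then x else x) = fun _ => x := by
      funext j; split <;> rfl
    rw [Amet, hv, hA2]
    intro i j; rfl
  -- sum formula
  have hsum : ∀ (u v : ℝ), ∑ j : Fin t, (if (j:ℕ) = t - 1 then u else v)
      = u + ((t:ℝ) - 1) * v := by
    intro u v
    have ht0 : 0 < t := by omega
    set i0 : Fin t := ⟨t - 1, by omega⟩ with hi0
    have hcond : ∀ j : Fin t, ((j:ℕ) = t - 1) = (j = i0) := by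
      intro j; simp [Fin.ext_iff, hi0]
    simp_rw [hcond]
    have hsplit : ∀ j : Fin t, (if j = i0 then u else v)
        = (if j = i0 then u - v else 0) + v := by
      intro j; split <;> ring
    simp_rw [hsplit, Finset.sum_add_distrib,
      Finset.sum_ite_eq' Finset.univ i0 (fun _ => u - v)]
    simp [Finset.card_univ]
    push_cast
    ring
  -- triangle-like inequality
  have htri : ∀ x y z : X, Amet A x y ≤ ((t:ℝ) - 1) * Amet A x z + Amet A y z := by
    intro x y z
    have h := hA3 (fun j : Fin t => if (j:ℕ) = t - 1 then y else x) z
    rw [Amet]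
    refine h.trans ?_
    have he : ∀ i : Fin t,
        Amet A (if (i:ℕ) = t - 1 then y else x) z
          = (if (i:ℕ) = t - 1 then Amet A y z else Amet A x z) := by
      intro i; split <;> rfl
    simp_rw [he, hsum]
    linarith
  -- symmetry
  have hsymm : ∀ x y : X, Amet A x y = Amet A y x := by
    intro x y
    have h1 := htri x y x
    have h2 := htri y x y
    simp [hself] at h1 h2
    linarith
  -- delta
  have hbt : b * t < 1 := by
    have := hb.2; rw [lt_div_iff₀ htpos] at this; linarith
  have hct : c * t < 1 := by
    have := hc.2; rw [lt_div_iff₀ htpos] at this; linarith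
  have h1mb : 0 < 1 - b := by nlinarith [hb.1]
  have hcd : 0 < 1 - ((t:ℝ) - 1) * c := by nlinarith [hc.1]
  set δ := max a (max (b / (1 - b)) (c / (1 - ((t:ℝ) - 1) * c))) with hδ
  have hδ0 : 0 ≤ δ := le_trans ha.1 (le_max_left _ _)
  have hδ1 : δ < 1 := by
    apply max_lt ha.2 (max_lt ?_ ?_)
    · rw [div_lt_one h1mb]; nlinarith [hb.1]
    · rw [div_lt_one hcd]; nlinarith [hc.1]
  have hδa : a ≤ δ := le_max_left _ _
  have hδb : b / (1 - b) ≤ δ := le_trans (le_max_left _ _) (le_max_right _ _)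
  have hδc : c / (1 - ((t:ℝ) - 1) * c) ≤ δ := le_trans (le_max_right _ _) (le_max_right _ _)
  -- contraction step
  have hstep : ∀ x : X, Amet A (f (f x)) (f x) ≤ δ * Amet A (f x) x := by
    intro x
    have hE : 0 ≤ Amet A (f x) x := hA1 _
    have hD : 0 ≤ Amet A (f (f x)) (f x) := hA1 _
    rcases hAZ (f x) x with h | h | h
    · exact h.trans (mul_le_mul_of_nonneg_right hδa hE)
    · have key : Amet A (f (f x)) (f x) ≤ b / (1 - b) * Amet A (f x) x := by
        rw [div_mul_eq_mul_div, le_div_iff₀ h1mb]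
        nlinarith [h]
      exact key.trans (mul_le_mul_of_nonneg_right hδb hE)
    · rw [hself] at h
      have htr := htri (f (f x)) x (f x)
      rw [hsymm x (f x)] at htr
      have key : Amet A (f (f x)) (f x)
          ≤ c / (1 - ((t:ℝ) - 1) * c) * Amet A (f x) x := by
        rw [div_mul_eq_mul_div, le_div_iff₀ hcd]
        nlinarith [h, htr, hc.1]
      exact key.trans (mul_le_mul_of_nonneg_right hδc hE)
  -- Picard bound
  have hmain : ∀ n : ℕ, Amet A (f^[n + 1] x₀) (f^[n] x₀) ≤ δ ^ n * Amet A x₀ (f x₀) := by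
    intro n
    induction n with
    | zero =>
      simp only [zero_add, Function.iterate_one, Function.iterate_zero, id_eq, pow_zero,
        one_mul]
      rw [hsymm]
    | succ n ih =>
      have h1 : f^[n + 2] x₀ = f (f (f^[n] x₀)) := by
        rw [Function.iterate_succ_apply', Function.iterate_succ_apply']
      have h2 : f^[n + 1] x₀ = f (f^[n] x₀) := Function.iterate_succ_apply' f n x₀
      rw [h1]
      calc Amet A (f (f (f^[n] x₀))) (f^[n + 1] x₀)
          = Amet A (f (f (f^[n] x₀))) (f (f^[n] x₀)) := by rw [h2]
        _ ≤ δ * Amet A (f (f^[n] x₀)) (f^[n] x₀) := hstep _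
        _ = δ * Amet A (f^[n + 1] x₀) (f^[n] x₀) := by rw [h2]
        _ ≤ δ * (δ ^ n * Amet A x₀ (f x₀)) := mul_le_mul_of_nonneg_left ih hδ0
        _ = δ ^ (n + 1) * Amet A x₀ (f x₀) := by ring
  -- Cauchy
  set D0 := Amet A x₀ (f x₀) with hD0def
  have hD0 : 0 ≤ D0 := hA1 _
  set C := ((t:ℝ) - 1) * D0 / (1 - δ) with hC
  have hCpos : 0 ≤ C := by
    apply div_nonneg
    · nlinarith
    · linarith
  have hgap : ∀ j m : ℕ, Amet A (f^[m] x₀) (f^[m + j] x₀) ≤ C * δ ^ m := by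
    intro j
    induction j with
    | zero =>
      intro m
      rw [Nat.add_zero, hself]
      exact mul_nonneg hCpos (pow_nonneg hδ0 m)
    | succ j ih =>
      intro m
      have htr := htri (f^[m] x₀) (f^[m + (j + 1)] x₀) (f^[m + 1] x₀)
      have h3' : Amet A (f^[m + (j + 1)] x₀) (f^[m + 1] x₀) ≤ C * δ ^ (m + 1) := by
        rw [hsymm]
        have e : m + (j + 1) = (m + 1) + j := by omega
        rw [e]
        exact ih (m + 1)
      have h4 : Amet A (f^[m] x₀) (f^[m + 1] x₀) ≤ δ ^ m * D0 := by
        rw [hsymm]; exact hmain m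
      have ht1 : (0:ℝ) ≤ (t:ℝ) - 1 := by linarith
      have h4' : ((t:ℝ) - 1) * Amet A (f^[m] x₀) (f^[m + 1] x₀)
          ≤ ((t:ℝ) - 1) * (δ ^ m * D0) := mul_le_mul_of_nonneg_left h4 ht1
      have hCδ : C * (1 - δ) = ((t:ℝ) - 1) * D0 := by
        rw [hC]; exact div_mul_cancel₀ _ (by linarith)
      have e1 : ((t:ℝ) - 1) * (δ ^ m * D0) = C * δ ^ m - C * δ ^ (m + 1) := by
        have h5 : (((t:ℝ) - 1) * D0) * δ ^ m = (C * (1 - δ)) * δ ^ m := by rw [hCδ]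
        linear_combination h5
      linarith
  have hbound : ∀ p : ℕ × ℕ,
      Amet A (f^[p.1] x₀) (f^[p.2] x₀) ≤ C * δ ^ (min p.1 p.2) := by
    intro p
    rcases le_total p.1 p.2 with h | h
    · rw [min_eq_left h]
      have := hgap (p.2 - p.1) p.1
      have e : p.1 + (p.2 - p.1) = p.2 := by omega
      rwa [e] at this
    · rw [min_eq_right h, hsymm]
      have := hgap (p.1 - p.2) p.2
      have e : p.2 + (p.1 - p.2) = p.1 := by omega
      rwa [e] at this
  have hmin : Tendsto (fun p : ℕ × ℕ => min p.1 p.2) atTop atTop := by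
    apply tendsto_atTop.2
    intro n
    filter_upwards [eventually_ge_atTop (n, n)] with p hp
    exact le_min hp.1 hp.2
  have htend : Tendsto (fun p : ℕ × ℕ => C * δ ^ (min p.1 p.2)) atTop (nhds 0) := by
    have h1 : Tendsto (fun n : ℕ => δ ^ n) atTop (nhds 0) :=
      tendsto_pow_atTop_nhds_zero_of_lt_one hδ0 hδ1
    have := (h1.comp hmin).const_mul C
    simpa using this
  refine ⟨δ, hδ0, hδ1, hmain, ?_⟩
  exact squeeze_zero (fun p => hA1 _) hbound htend
end

section
/- Let (X, d) be a complete metric space and f : X → X a mapping for which there exist real numbers a ∈ (0,1), b, c ∈ (0, 1/2) such that for each pair x, y ∈ X at least one of the following holds: (Z1) d(fx, fy) ≤ a·d(x, y); (Z2) d(fx, fy) ≤ b[d(x, fx) + d(y, fy)]; (Z3) d(fx, fy) ≤ c[d(x, fy) + d(y, fx)]. Then f has a unique fixed point p, and the Picard iteration x_{n+1} = f(x_n) converges to p for any starting point x_0 ∈ X. -/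
open Filter

set_option maxHeartbeats 1000000 in
theorem stmt8 {X : Type*} [MetricSpace X] [CompleteSpace X] [Nonempty X]
    (f : X → X) (a b c : ℝ)
    (ha : 0 < a ∧ a < 1) (hb : 0 < b ∧ b < 1 / 2) (hc : 0 < c ∧ c < 1 / 2)
    (hZ : ∀ x y : X,
      dist (f x) (f y) ≤ a * dist x y ∨
      dist (f x) (f y) ≤ b * (dist x (f x) + dist y (f y)) ∨
      dist (f x) (f y) ≤ c * (dist x (f y) + dist y (f x))) :
    ∃ p : X, f p = p ∧ (∀ q : X, f q = q → q = p) ∧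
      ∀ x₀ : X, Tendsto (fun n => f^[n] x₀) atTop (nhds p) := by
  obtain ⟨ha0, ha1⟩ := ha
  obtain ⟨hb0, hb1⟩ := hb
  obtain ⟨hc0, hc1⟩ := hc
  set h : ℝ := max a (max (b / (1 - b)) (c / (1 - c))) with hh
  have hb2 : (0:ℝ) < 1 - b := by linarith
  have hc2 : (0:ℝ) < 1 - c := by linarith
  have hbb : b / (1 - b) < 1 := by rw [div_lt_one hb2]; linarith
  have hcc : c / (1 - c) < 1 := by rw [div_lt_one hc2]; linarith
  have h0 : 0 ≤ h := le_trans ha0.le (le_max_left _ _)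
  have h1 : h < 1 := by
    rw [hh, max_lt_iff, max_lt_iff]; exact ⟨ha1, hbb, hcc⟩
  have hah : a ≤ h := le_max_left _ _
  have hbh : b / (1 - b) ≤ h := le_trans (le_max_left _ _) (le_max_right _ _)
  have hch : c / (1 - c) ≤ h := le_trans (le_max_right _ _) (le_max_right _ _)
  -- key contraction-like inequality
  have key : ∀ x y : X, dist (f x) (f y) ≤ h * (dist x y + 2 * dist x (f x)) := by
    intro x y
    have hd0 : (0:ℝ) ≤ dist x y := dist_nonneg
    have hd1 : (0:ℝ) ≤ dist x (f x) := dist_nonneg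
    rcases hZ x y with H | H | H
    · calc dist (f x) (f y) ≤ a * dist x y := H
        _ ≤ h * (dist x y + 2 * dist x (f x)) := by nlinarith
    · have t1 : dist y (f y) ≤ dist y x + dist x (f x) + dist (f x) (f y) :=
        le_trans (dist_triangle y (f x) (f y))
          (by have := dist_triangle y x (f x); linarith)
      rw [dist_comm y x] at t1
      have h2 : (1 - b) * dist (f x) (f y) ≤ b * (dist x y + 2 * dist x (f x)) := by
        nlinarith
      have h3 : dist (f x) (f y) ≤ b / (1 - b) * (dist x y + 2 * dist x (f x)) := by
        rw [div_mul_eq_mul_div, le_div_iff₀ hb2]; nlinarith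
      calc dist (f x) (f y) ≤ b / (1 - b) * (dist x y + 2 * dist x (f x)) := h3
        _ ≤ h * (dist x y + 2 * dist x (f x)) := by nlinarith
    · have t1 : dist x (f y) ≤ dist x (f x) + dist (f x) (f y) := dist_triangle _ _ _
      have t2 : dist y (f x) ≤ dist y x + dist x (f x) := dist_triangle _ _ _
      rw [dist_comm y x] at t2
      have h2 : (1 - c) * dist (f x) (f y) ≤ c * (dist x y + 2 * dist x (f x)) := by
        nlinarith
      have h3 : dist (f x) (f y) ≤ c / (1 - c) * (dist x y + 2 * dist x (f x)) := by
        rw [div_mul_eq_mul_div, le_div_iff₀ hc2]; nlinarith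
      calc dist (f x) (f y) ≤ c / (1 - c) * (dist x y + 2 * dist x (f x)) := h3
        _ ≤ h * (dist x y + 2 * dist x (f x)) := by nlinarith
  -- step inequality
  have step : ∀ x : X, dist (f x) (f (f x)) ≤ h * dist x (f x) := by
    intro x
    have hd1 : (0:ℝ) ≤ dist x (f x) := dist_nonneg
    rcases hZ x (f x) with H | H | H
    · exact le_trans H (by nlinarith)
    · have h2 : (1 - b) * dist (f x) (f (f x)) ≤ b * dist x (f x) := by nlinarith
      have h3 : dist (f x) (f (f x)) ≤ b / (1 - b) * dist x (f x) := by
        rw [div_mul_eq_mul_div, le_div_iff₀ hb2]; nlinarith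
      exact le_trans h3 (by nlinarith)
    · have t1 : dist x (f (f x)) ≤ dist x (f x) + dist (f x) (f (f x)) := dist_triangle _ _ _
      have h2 : (1 - c) * dist (f x) (f (f x)) ≤ c * dist x (f x) := by
        simp only [dist_self] at H; nlinarith
      have h3 : dist (f x) (f (f x)) ≤ c / (1 - c) * dist x (f x) := by
        rw [div_mul_eq_mul_div, le_div_iff₀ hc2]; nlinarith
      exact le_trans h3 (by nlinarith)
  -- for each x₀, the Picard iteration converges to a fixed point
  have main : ∀ x₀ : X, ∃ p : X, f p = p ∧ Tendsto (fun n => f^[n] x₀) atTop (nhds p) := by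
    intro x₀
    set u : ℕ → X := fun n => f^[n] x₀ with hu
    have husucc : ∀ n, u (n + 1) = f (u n) := by
      intro n; simp [hu, Function.iterate_succ_apply']
    have hgeom : ∀ n, dist (u n) (u (n + 1)) ≤ dist x₀ (f x₀) * h ^ n := by
      intro n
      induction n with
      | zero => simp [hu]
      | succ n ih =>
        calc dist (u (n + 1)) (u (n + 2)) = dist (f (u n)) (f (f (u n))) := by
              rw [husucc (n+1), husucc n]
          _ ≤ h * dist (u n) (f (u n)) := step (u n)
          _ = h * dist (u n) (u (n + 1)) := by rw [husucc n]
          _ ≤ h * (dist x₀ (f x₀) * h ^ n) := by nlinarith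
          _ = dist x₀ (f x₀) * h ^ (n + 1) := by ring
    have hcauchy : CauchySeq u := cauchySeq_of_le_geometric h (dist x₀ (f x₀)) h1 hgeom
    obtain ⟨p, hp⟩ := cauchySeq_tendsto_of_complete hcauchy
    refine ⟨p, ?_, hp⟩
    -- consecutive distances tend to 0
    have hcons : Tendsto (fun n => dist (u n) (u (n + 1))) atTop (nhds 0) := by
      have : Tendsto (fun n : ℕ => dist x₀ (f x₀) * h ^ n) atTop (nhds 0) := by
        simpa using (tendsto_pow_atTop_nhds_zero_of_lt_one h0 h1).const_mul (dist x₀ (f x₀))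
      exact squeeze_zero (fun n => dist_nonneg) hgeom this
    have hdistp : Tendsto (fun n => dist (u n) p) atTop (nhds 0) :=
      tendsto_iff_dist_tendsto_zero.1 hp
    have hfp : Tendsto (fun n => u (n + 1)) atTop (nhds (f p)) := by
      rw [tendsto_iff_dist_tendsto_zero]
      have hle : ∀ n, dist (u (n + 1)) (f p) ≤ h * (dist (u n) p + 2 * dist (u n) (u (n + 1))) := by
        intro n
        calc dist (u (n + 1)) (f p) = dist (f (u n)) (f p) := by rw [husucc n]
          _ ≤ h * (dist (u n) p + 2 * dist (u n) (f (u n))) := key _ _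
          _ = h * (dist (u n) p + 2 * dist (u n) (u (n + 1))) := by rw [husucc n]
      have hlim : Tendsto (fun n => h * (dist (u n) p + 2 * dist (u n) (u (n + 1))))
          atTop (nhds 0) := by
        have := ((hdistp.add (hcons.const_mul 2)).const_mul h)
        simpa using this
      exact squeeze_zero (fun n => dist_nonneg) hle hlim
    have hpp : Tendsto (fun n => u (n + 1)) atTop (nhds p) :=
      hp.comp (tendsto_add_atTop_nat 1)
    exact tendsto_nhds_unique hfp hpp
  obtain ⟨p, hp, hconv⟩ := main (Classical.arbitrary X)
  have huniq : ∀ q : X, f q = q → q = p := by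
    intro q hq
    rcases hZ p q with H | H | H
    · rw [hp, hq] at H
      have : dist p q = 0 := by nlinarith [dist_nonneg (x := p) (y := q)]
      exact (dist_eq_zero.1 this).symm
    · rw [hp, hq] at H
      simp only [dist_self] at H
      have : dist p q = 0 := le_antisymm (by linarith) dist_nonneg
      exact (dist_eq_zero.1 this).symm
    · rw [hp, hq, dist_comm q p] at H
      have : dist p q = 0 := by nlinarith [dist_nonneg (x := p) (y := q)]
      exact (dist_eq_zero.1 this).symm
  refine ⟨p, hp, huniq, fun x₀ => ?_⟩
  obtain ⟨q, hq, hconvq⟩ := main x₀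
  rwa [huniq q hq] at hconvq
end

section
/- Let (X, A) be an A-metric space and f : X → X a mapping satisfying, for some δ ∈ [0,1) and all x, y ∈ X, A(fx, ..., fx, fy) ≤ δ·A(x, ..., x, y) + t·δ·A(fy, ..., fy, x). If a Picard sequence x_{n+1} = f(x_n) converges to some p ∈ X, then f(p) = p. -/
open Finset Filter

theorem stmt10 {X : Type*} {t : ℕ} (ht : 2 ≤ t) (A : (Fin t → X) → ℝ)
    (hA1 : ∀ v, 0 ≤ A v)
    (hA2 : ∀ v, A v = 0 ↔ ∀ i j, v i = v j)
    (hA3 : ∀ (v : Fin t → X) (y : X), A v ≤ ∑ i, Amet A (v i) y)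
    (f : X → X) (δ : ℝ) (hδ : 0 ≤ δ ∧ δ < 1)
    (hf : ∀ x y : X, Amet A (f x) (f y) ≤ δ * Amet A x y + t * δ * Amet A (f y) x)
    (x : ℕ → X) (hx : ∀ n, x (n + 1) = f (x n)) (p : X)
    (hconv : Tendsto (fun n => Amet A (x n) p) atTop (nhds 0)) :
    f p = p := by
  obtain ⟨hδ0, hδ1⟩ := hδ
  have ht1 : (0:ℝ) ≤ (t:ℝ) - 1 := by
    have : (2:ℝ) ≤ (t:ℝ) := by exact_mod_cast ht
    linarith
  have hd0 : ∀ u v : X, 0 ≤ Amet A u v := fun u v => hA1 _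
  have hself : ∀ u : X, Amet A u u = 0 := by
    intro u
    apply (hA2 _).2
    intro i j
    by_cases h : (i:ℕ) = t - 1 <;> by_cases h' : (j:ℕ) = t - 1 <;> simp [h, h']
  have hsum : ∀ (a b : ℝ), ∑ i : Fin t, (if (i:ℕ) = t-1 then a else b) = a + ((t:ℝ)-1)*b := by
    intro a b
    have heq : ∀ i : Fin t, (if (i:ℕ) = t-1 then a else b)
        = b + (if i = (⟨t-1, by omega⟩ : Fin t) then a - b else 0) := by
      intro i
      by_cases h : (i:ℕ) = t - 1
      · simp [h, Fin.ext_iff]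
      · simp [h, Fin.ext_iff]
    rw [Finset.sum_congr rfl (fun i _ => heq i), Finset.sum_add_distrib,
      Finset.sum_const, Finset.sum_ite_eq']
    simp
    ring
  have tri : ∀ u v w : X, Amet A u v ≤ ((t:ℝ)-1) * Amet A u w + Amet A v w := by
    intro u v w
    calc Amet A u v ≤ ∑ i : Fin t, Amet A ((fun j => if (j:ℕ) = t-1 then v else u) i) w :=
          hA3 (fun j => if (j:ℕ) = t-1 then v else u) w
      _ = ∑ i : Fin t, (if (i:ℕ) = t-1 then Amet A v w else Amet A u w) := by
          apply Finset.sum_congr rfl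
          intro i _
          by_cases h : (i:ℕ) = t-1 <;> simp [h]
      _ = Amet A v w + ((t:ℝ)-1) * Amet A u w := hsum _ _
      _ = _ := by ring
  have hsym : ∀ u v : X, Amet A u v ≤ Amet A v u := by
    intro u v
    have h := tri u v u
    simpa [hself] using h
  have key : ∀ n, Amet A (f p) p ≤
      ((t:ℝ)-1) * (δ * Amet A (x n) p + (t:ℝ)*δ * Amet A (x (n+1)) p) + Amet A (x (n+1)) p := by
    intro n
    have h1 : Amet A (f p) p ≤ ((t:ℝ)-1) * Amet A (f p) (x (n+1)) + Amet A p (x (n+1)) :=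
      tri _ _ _
    have h2 : Amet A (f p) (x (n+1)) ≤ δ * Amet A p (x n) + (t:ℝ)*δ * Amet A (x (n+1)) p := by
      rw [hx n]
      exact hf p (x n)
    have h3 : Amet A p (x (n+1)) ≤ Amet A (x (n+1)) p := hsym _ _
    have h4 : Amet A p (x n) ≤ Amet A (x n) p := hsym _ _
    have h5 := mul_le_mul_of_nonneg_left h2 ht1
    have h6 : ((t:ℝ)-1) * (δ * Amet A p (x n)) ≤ ((t:ℝ)-1) * (δ * Amet A (x n) p) := by
      apply mul_le_mul_of_nonneg_left _ ht1
      exact mul_le_mul_of_nonneg_left h4 hδ0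
    nlinarith [h1, h5, h6, h3]
  have hb : Tendsto (fun n => Amet A (x (n+1)) p) atTop (nhds 0) :=
    hconv.comp (tendsto_add_atTop_nat 1)
  have hc : Tendsto (fun n => ((t:ℝ)-1) * (δ * Amet A (x n) p + (t:ℝ)*δ * Amet A (x (n+1)) p)
      + Amet A (x (n+1)) p) atTop (nhds 0) := by
    have := (((hconv.const_mul δ).add (hb.const_mul ((t:ℝ)*δ))).const_mul ((t:ℝ)-1)).add hb
    simpa using this
  have hle : Amet A (f p) p ≤ 0 := ge_of_tendsto hc (Eventually.of_forall key)
  have hzero : Amet A (f p) p = 0 := le_antisymm hle (hd0 _ _)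
  have hall := (hA2 _).1 hzero
  have h := hall ⟨0, by omega⟩ ⟨t-1, by omega⟩
  simpa [show (0:ℕ) ≠ t - 1 by omega] using h
end

section
/- Let (X, A) be an A-metric space and f : X → X an AZ mapping with constants a ∈ [0,1), b, c ∈ [0, 1/t). If for a pair x, y ∈ X condition (AZ2) holds, i.e., A(fx,...,fx,fy) ≤ b[A(fx,...,fx,x) + A(fy,...,fy,y)], then A(fx,...,fx,fy) ≤ (b/(1−b(t−1)))·A(x,...,x,y) + (tb/(1−b(t−1)))·A(fx,...,fx,x). -/
/-! Bounding `A(fy,…,fy,y)` by the triangle inequality through `fx` and then `x` (with symmetry)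
and substituting into (AZ2) gives
`D ≤ b (P + (t-1) D + (t-1) P + Q)` for `D = A(fx,…,fx,fy)`, `P = A(fx,…,fx,x)`, `Q = A(x,…,x,y)`;
since `b (t-1) < 1` this can be solved for `D`. -/

open Finset Filter

section AMetric

variable {X : Type*} {t : ℕ} (A : (Fin t → X) → ℝ)

theorem Amet_self (hA : ∀ v : Fin t → X, (∀ i j, v i = v j) → A v = 0) (u : X) :
    Amet A u u = 0 :=
  hA _ fun _ _ => by simp only [ite_self]

theorem sum_Amet_ite_last (ht : 1 ≤ t) (u v w : X) :
    ∑ i : Fin t, Amet A (if (i : ℕ) = t - 1 then v else u) w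
      = ((t : ℝ) - 1) * Amet A u w + Amet A v w := by
  obtain ⟨n, rfl⟩ : ∃ n, t = n + 1 := ⟨t - 1, by omega⟩
  rw [Fin.sum_univ_castSucc]
  simp [Fin.val_castSucc, (Fin.is_lt _).ne]

theorem Amet_le_of_le_sum (ht : 1 ≤ t)
    (hA : ∀ (v : Fin t → X) (y : X), A v ≤ ∑ i, Amet A (v i) y) (u v w : X) :
    Amet A u v ≤ ((t : ℝ) - 1) * Amet A u w + Amet A v w :=
  (hA _ w).trans_eq (sum_Amet_ite_last A ht u v w)

theorem Amet_comm (ht : 1 ≤ t) (hA0 : ∀ v : Fin t → X, (∀ i j, v i = v j) → A v = 0)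
    (hA : ∀ (v : Fin t → X) (y : X), A v ≤ ∑ i, Amet A (v i) y) (u v : X) :
    Amet A u v = Amet A v u := by
  have half : ∀ u v : X, Amet A u v ≤ Amet A v u := fun u v => by
    simpa [Amet_self A hA0] using Amet_le_of_le_sum A ht hA u v u
  exact (half u v).antisymm (half v u)

end AMetric

theorem stmt18_general {X : Type*} {t : ℕ} (ht : 2 ≤ t) (A : (Fin t → X) → ℝ)
    (hA2 : ∀ v, A v = 0 ↔ ∀ i j, v i = v j)
    (hA3 : ∀ (v : Fin t → X) (y : X), A v ≤ ∑ i, Amet A (v i) y)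
    (f : X → X) (b : ℝ)
    (hb : 0 ≤ b ∧ b < 1 / t)
    (x y : X)
    (hAZ2 : Amet A (f x) (f y) ≤ b * (Amet A (f x) x + Amet A (f y) y)) :
    Amet A (f x) (f y) ≤
      (b / (1 - b * ((t : ℝ) - 1))) * Amet A x y +
      ((t : ℝ) * b / (1 - b * ((t : ℝ) - 1))) * Amet A (f x) x := by
  have ht1 : 1 ≤ t := by omega
  have hcomm := Amet_comm A ht1 (fun v => (hA2 v).mpr) hA3
  have htri := Amet_le_of_le_sum A ht1 hA3
  have hfyy : Amet A (f y) y ≤ ((t : ℝ) - 1) * Amet A (f x) (f y)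
      + (((t : ℝ) - 1) * Amet A (f x) x + Amet A x y) := by
    calc Amet A (f y) y ≤ ((t : ℝ) - 1) * Amet A (f y) (f x) + Amet A y (f x) := htri _ _ _
      _ = ((t : ℝ) - 1) * Amet A (f x) (f y) + Amet A (f x) y := by rw [hcomm (f y), hcomm y]
      _ ≤ _ := by gcongr; simpa only [hcomm y x] using htri (f x) y x
  have hbt : b * t < 1 := (lt_div_iff₀ (by positivity)).mp hb.2
  rw [div_mul_eq_mul_div, div_mul_eq_mul_div, ← add_div, le_div_iff₀ (by linarith)]
  linarith [mul_le_mul_of_nonneg_left hfyy hb.1]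

theorem stmt18 {X : Type*} {t : ℕ} (ht : 2 ≤ t) (A : (Fin t → X) → ℝ)
    (hA1 : ∀ v, 0 ≤ A v)
    (hA2 : ∀ v, A v = 0 ↔ ∀ i j, v i = v j)
    (hA3 : ∀ (v : Fin t → X) (y : X), A v ≤ ∑ i, Amet A (v i) y)
    (f : X → X) (a b c : ℝ)
    (ha : 0 ≤ a ∧ a < 1) (hb : 0 ≤ b ∧ b < 1 / t) (hc : 0 ≤ c ∧ c < 1 / t)
    (x y : X)
    (hAZ2 : Amet A (f x) (f y) ≤ b * (Amet A (f x) x + Amet A (f y) y)) :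
    Amet A (f x) (f y) ≤
      (b / (1 - b * ((t : ℝ) - 1))) * Amet A x y +
      ((t : ℝ) * b / (1 - b * ((t : ℝ) - 1))) * Amet A (f x) x :=
  stmt18_general ht A hA2 hA3 f b hb x y hAZ2
end
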